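/- arXiv:math/0212244 — 2 statements merged into one kernel-verified Lean document; each statement's English description precedes it below -/
import Mathlib

section
/- Let n ≥ 4 and let f_1, …, f_n be linearly independent vectors in EuclideanSpace ℝ (Fin n), each of the form ±e_i ± e_j for some i ≠ j (where e_1, …, e_n is the standard orthonormal basis), and suppose the family is indecomposable. Then the subgroup of linear isometries of EuclideanSpace ℝ (Fin n) generated by the reflections in f_1, …, f_n equals the subgroup generated by all reflections in the vectors e_i + e_j and e_i − e_j, i < j — namely the Weyl group of D_n. (Every maximal rank proper reflection subgroup of D_n is decomposable, so an indecomposable simplex embedded in D_n generates all of D_n.) -/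
open scoped RealInnerProductSpace

/-- The graph whose vertices are the members of the family `f`, two of them being
adjacent iff they are not orthogonal; the family is indecomposable iff this graph
is connected. -/
def gramGraph {E : Type*} [NormedAddCommGroup E] [InnerProductSpace ℝ E]
    {ι : Type*} (f : ι → E) : SimpleGraph ι where
  Adj i j := i ≠ j ∧ ⟪f i, f j⟫ ≠ 0
  symm := ⟨by
    intro i j h
    exact ⟨h.1.symm, by rw [real_inner_comm]; exact h.2⟩⟩
  loopless := ⟨fun i h => h.1 rfl⟩

/-- The reflection in the hyperplane orthogonal to a vector `v`. -/
noncomputable def reflIn {m : ℕ} (v : EuclideanSpace ℝ (Fin m)) :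
    EuclideanSpace ℝ (Fin m) ≃ₗᵢ[ℝ] EuclideanSpace ℝ (Fin m) :=
  Submodule.reflection (ℝ ∙ v)ᗮ

/-- `v` is of the form `±eᵢ ± eⱼ` for the (unordered) pair `{i, j}`. -/
def HasBDPair {m : ℕ} (v : EuclideanSpace ℝ (Fin m)) (i j : Fin m) : Prop :=
  v = EuclideanSpace.single i 1 + EuclideanSpace.single j 1 ∨
  v = EuclideanSpace.single i 1 - EuclideanSpace.single j 1 ∨
  v = EuclideanSpace.single j 1 - EuclideanSpace.single i 1 ∨
  v = -(EuclideanSpace.single i 1 + EuclideanSpace.single j 1)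


/-!
Write each `f k` as `c • (eᵢ + σ eⱼ)` with `σ = ±1`, and let `W` be the group generated by the
reflections in the `f k`. Conjugating the reflection in `eⱼ + τ eₖ` by the one in `eᵢ + σ eⱼ`
gives the reflection in `eᵢ - στ eₖ`. Since the `f k` span, every coordinate occurs in some `f k`,
and two non-orthogonal `f k` share a coordinate; so connectedness of the Gram graph links every
pair `i ≠ j` by some reflection of `W` in `eᵢ ± eⱼ`. If each pair were linked by a single sign
only, these signs would be `-ηᵢ ηⱼ` for a sign vector `η`, which would then be orthogonal to every
`f k`; hence some pair is linked by both signs, and conjugation spreads both signs to every pair.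
-/

section Reflection

variable {m : ℕ}

lemma reflIn_apply (v x : EuclideanSpace ℝ (Fin m)) :
    reflIn v x = x - (2 * ⟪v, x⟫ / ⟪v, v⟫) • v := by
  rw [reflIn, Submodule.reflection_orthogonal_apply, Submodule.reflection_singleton_apply,
    real_inner_self_eq_norm_sq, RCLike.ofReal_real_eq_id, id]
  module

lemma reflIn_smul (v : EuclideanSpace ℝ (Fin m)) {c : ℝ} (hc : c ≠ 0) :
    reflIn (c • v) = reflIn v := by
  simp only [reflIn, Submodule.span_singleton_smul_eq (IsUnit.mk0 c hc)]

lemma conj_reflIn (g : EuclideanSpace ℝ (Fin m) ≃ₗᵢ[ℝ] EuclideanSpace ℝ (Fin m))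
    (v : EuclideanSpace ℝ (Fin m)) :
    g * reflIn v * g⁻¹ = reflIn (g v) := by
  ext1 x
  obtain ⟨y, rfl⟩ := g.surjective x
  simp only [LinearIsometryEquiv.coe_mul, Function.comp_apply, LinearIsometryEquiv.coe_inv,
    g.symm_apply_apply, reflIn_apply, map_sub, map_smul, g.inner_map_map]

lemma reflIn_mul_reflIn_mul_reflIn (u v : EuclideanSpace ℝ (Fin m)) :
    reflIn u * reflIn v * reflIn u = reflIn (reflIn u v) := by
  have hinv : (reflIn u)⁻¹ = reflIn u := Submodule.reflection_inv
  rw [← conj_reflIn, hinv]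

end Reflection

lemma Int.cast_units_mul_self {R : Type*} [Ring R] (σ : ℤˣ) : (σ : R) * σ = 1 := by
  rw [← Int.cast_mul, ← Units.val_mul, Int.units_mul_self, Units.val_one, Int.cast_one]

lemma LinearIndependent.eq_zero_of_forall_inner_eq_zero {𝕜 E ι : Type*} [RCLike 𝕜]
    [NormedAddCommGroup E] [InnerProductSpace 𝕜 E] [FiniteDimensional 𝕜 E] [Fintype ι]
    {f : ι → E} (hf : LinearIndependent 𝕜 f) (hcard : Fintype.card ι = Module.finrank 𝕜 E)
    {x : E} (hx : ∀ k, inner 𝕜 (f k) x = 0) : x = 0 :=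
  InnerProductSpace.ext_inner_left_basis (basisOfLinearIndependentOfCardEqFinrank' f hf hcard)
    (by simpa using hx)

namespace EuclideanSpace

variable {ι κ : Type*} [Fintype κ]

lemma exists_apply_ne_zero_of_inner_ne_zero {x y : EuclideanSpace ℝ κ} (h : ⟪x, y⟫ ≠ 0) :
    ∃ i, x i ≠ 0 ∧ y i ≠ 0 := by
  contrapose! h
  rw [PiLp.inner_apply]
  refine Finset.sum_eq_zero fun i _ => ?_
  by_cases hx : x i = 0
  · simp [hx]
  · simp [h i hx]

lemma exists_apply_ne_zero_of_forall_inner_eq_zero [DecidableEq κ]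
    {f : ι → EuclideanSpace ℝ κ} (hf : ∀ x, (∀ k, ⟪f k, x⟫ = 0) → x = 0) (i : κ) :
    ∃ k, f k i ≠ 0 := by
  by_contra! h
  have h₀ := hf (single i 1) fun k => by simp [inner_single_right, h k]
  simp at h₀

end EuclideanSpace

lemma forall_rel_of_gramGraph_connected {ι κ : Type*} [Fintype κ]
    {f : ι → EuclideanSpace ℝ κ} {R : κ → κ → Prop} (hR : Equivalence R)
    (hf : (gramGraph f).Connected) (hcover : ∀ i, ∃ k, f k i ≠ 0)
    (hsupp : ∀ k i j, f k i ≠ 0 → f k j ≠ 0 → R i j) (i j : κ) : R i j := by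
  have hwalk : ∀ {k l} (_ : (gramGraph f).Walk k l) {i j}, f k i ≠ 0 → f l j ≠ 0 → R i j := by
    intro k l p
    induction p with
    | nil => exact hsupp _ _ _
    | cons hadj _ ih =>
      obtain ⟨t, hkt, hlt⟩ := EuclideanSpace.exists_apply_ne_zero_of_inner_ne_zero hadj.2
      exact fun hi hj => hR.trans (hsupp _ _ _ hi hkt) (ih hlt hj)
  obtain ⟨k, hk⟩ := hcover i
  obtain ⟨l, hl⟩ := hcover j
  exact hwalk (hf.preconnected k l).some hk hl

namespace Dn

variable {m : ℕ}

noncomputable def root (i j : Fin m) (σ : ℤˣ) : EuclideanSpace ℝ (Fin m) :=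
  EuclideanSpace.single i 1 + (σ : ℝ) • EuclideanSpace.single j 1

lemma root_apply (i j t : Fin m) (σ : ℤˣ) :
    root i j σ t = (if t = i then 1 else 0) + σ * (if t = j then 1 else 0) := by
  simp [root]

lemma root_one (i j : Fin m) :
    root i j 1 = EuclideanSpace.single i 1 + EuclideanSpace.single j 1 := by
  simp [root]

lemma root_neg_one (i j : Fin m) :
    root i j (-1) = EuclideanSpace.single i 1 - EuclideanSpace.single j 1 := by
  simp [root, sub_eq_add_neg]

lemma root_comm (i j : Fin m) (σ : ℤˣ) : root j i σ = (σ : ℝ) • root i j σ := by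
  rw [root, root, smul_add, smul_smul, Int.cast_units_mul_self, one_smul, add_comm]

lemma inner_root_left (i j : Fin m) (σ : ℤˣ) (x : EuclideanSpace ℝ (Fin m)) :
    ⟪root i j σ, x⟫ = x i + σ * x j := by
  simp [root, inner_add_left, real_inner_smul_left, EuclideanSpace.inner_single_left]

lemma eq_or_eq_of_root_apply_ne_zero {i j t : Fin m} {σ : ℤˣ} (h : root i j σ t ≠ 0) :
    t = i ∨ t = j := by
  contrapose! h
  simp [root_apply, h.1, h.2]

lemma inner_root_self {i j : Fin m} (hij : i ≠ j) (σ : ℤˣ) : ⟪root i j σ, root i j σ⟫ = 2 := by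
  rw [inner_root_left, root_apply, root_apply]
  norm_num [hij, hij.symm, Int.cast_units_mul_self]

lemma reflIn_root_apply_root {i j k : Fin m} (hij : i ≠ j) (hik : i ≠ k) (hjk : j ≠ k)
    (σ τ : ℤˣ) : reflIn (root i j σ) (root j k τ) = (-σ : ℝ) • root i k (-(σ * τ)) := by
  have hσ := Int.cast_units_mul_self (R := ℝ) σ
  rw [reflIn_apply, inner_root_self hij, inner_root_left, root_apply, root_apply]
  simp only [root, if_neg hij, if_neg hik, if_neg hjk]
  push_cast
  linear_combination (norm := module)
    hσ • -(EuclideanSpace.single j 1 + (τ : ℝ) • EuclideanSpace.single k 1 :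
      EuclideanSpace ℝ (Fin m))

lemma _root_.HasBDPair.exists_eq_smul_root {v : EuclideanSpace ℝ (Fin m)} {i j : Fin m}
    (h : HasBDPair v i j) : ∃ (c : ℝ) (σ : ℤˣ), c ≠ 0 ∧ v = c • root i j σ := by
  rcases h with rfl | rfl | rfl | rfl
  · exact ⟨1, 1, one_ne_zero, by rw [root_one, one_smul]⟩
  · exact ⟨1, -1, one_ne_zero, by rw [root_neg_one, one_smul]⟩
  · exact ⟨-1, -1, neg_ne_zero.mpr one_ne_zero, by rw [root_neg_one, neg_one_smul, neg_sub]⟩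
  · exact ⟨-1, 1, neg_ne_zero.mpr one_ne_zero, by rw [root_one, neg_one_smul]⟩

lemma reflIn_root_comm (i j : Fin m) (σ : ℤˣ) : reflIn (root j i σ) = reflIn (root i j σ) := by
  rw [root_comm, reflIn_smul _ (by simp)]

variable {W : Subgroup (EuclideanSpace ℝ (Fin m) ≃ₗᵢ[ℝ] EuclideanSpace ℝ (Fin m))}

lemma reflIn_root_mem_trans {i j k : Fin m} (hij : i ≠ j) (hik : i ≠ k) (hjk : j ≠ k)
    {σ τ : ℤˣ} (h₁ : reflIn (root i j σ) ∈ W) (h₂ : reflIn (root j k τ) ∈ W) :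
    reflIn (root i k (-(σ * τ))) ∈ W := by
  have h := W.mul_mem (W.mul_mem h₁ h₂) h₁
  rwa [reflIn_mul_reflIn_mul_reflIn, reflIn_root_apply_root hij hik hjk,
    reflIn_smul _ (by simp)] at h

variable (W) in
def Linked (i j : Fin m) : Prop :=
  i ≠ j → ∃ σ : ℤˣ, reflIn (root i j σ) ∈ W

lemma linked_equivalence : Equivalence (Linked W) where
  refl _ h := absurd rfl h
  symm {i j} h hji := by
    obtain ⟨σ, hσ⟩ := h hji.symm
    exact ⟨σ, by rwa [reflIn_root_comm]⟩
  trans {i j k} hij hjk hik := by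
    rcases eq_or_ne i j with rfl | hij'
    · exact hjk hik
    rcases eq_or_ne j k with rfl | hjk'
    · exact hij hik
    obtain ⟨σ, hσ⟩ := hij hij'
    obtain ⟨τ, hτ⟩ := hjk hjk'
    exact ⟨_, reflIn_root_mem_trans hij' hik hjk' hσ hτ⟩

lemma linked_of_root_apply_ne_zero {i j s t : Fin m} {σ : ℤˣ} (h : reflIn (root i j σ) ∈ W)
    (hs : root i j σ s ≠ 0) (ht : root i j σ t ≠ 0) : Linked W s t := by
  have hij : Linked W i j := fun _ => ⟨σ, h⟩
  rcases eq_or_eq_of_root_apply_ne_zero hs with rfl | rfl <;>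
    rcases eq_or_eq_of_root_apply_ne_zero ht with rfl | rfl
  · exact linked_equivalence.refl _
  · exact hij
  · exact linked_equivalence.symm hij
  · exact linked_equivalence.refl _

variable (W) in
def BothSigns (i j : Fin m) : Prop :=
  ∀ σ : ℤˣ, reflIn (root i j σ) ∈ W

lemma BothSigns.symm {i j : Fin m} (h : BothSigns W i j) : BothSigns W j i := fun σ => by
  rw [reflIn_root_comm]
  exact h σ

lemma BothSigns.trans {i j k : Fin m} (hij : i ≠ j) (hik : i ≠ k) (hjk : j ≠ k)
    (h : BothSigns W i j) {τ : ℤˣ} (hτ : reflIn (root j k τ) ∈ W) : BothSigns W i k := by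
  intro σ
  have hσ : -(-(σ * τ) * τ) = σ := by
    rw [neg_mul, neg_neg, mul_assoc, Int.units_mul_self, mul_one]
  simpa only [hσ] using reflIn_root_mem_trans hij hik hjk (h (-(σ * τ))) hτ

lemma bothSigns_of_bothSigns (hlinked : ∀ i j, Linked W i j) {a b : Fin m} (hab : a ≠ b)
    (h : BothSigns W a b) {i j : Fin m} (hij : i ≠ j) : BothSigns W i j := by
  have hleft : ∀ {a b}, a ≠ b → BothSigns W a b → ∀ c, a ≠ c → BothSigns W a c := by
    intro a b hab h c hac
    rcases eq_or_ne b c with rfl | hbc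
    · exact h
    obtain ⟨τ, hτ⟩ := hlinked b c hbc
    exact h.trans hab hac hbc hτ
  rcases eq_or_ne a i with rfl | hai
  · exact hleft hab h j hij
  · exact hleft hai.symm (hleft hab h i hai).symm j hij

lemma sign_eq_of_not_bothSigns {i j : Fin m} (h : ¬ BothSigns W i j) {σ τ : ℤˣ}
    (hσ : reflIn (root i j σ) ∈ W) (hτ : reflIn (root i j τ) ∈ W) : σ = τ := by
  by_contra hne
  refine h fun ρ => ?_
  rcases eq_or_ne ρ σ with rfl | hρσ
  · exact hσ
  · rwa [Int.units_ne_iff_eq_neg.mp hρσ, Int.units_ne_iff_eq_neg.mp hne, neg_neg]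

lemma exists_bothSigns (i₀ : Fin m) (hlinked : ∀ i j, Linked W i j)
    (hspan : ∀ x : EuclideanSpace ℝ (Fin m),
      (∀ i j σ, i ≠ j → reflIn (root i j σ) ∈ W → ⟪root i j σ, x⟫ = 0) → x = 0) :
    ∃ a b, a ≠ b ∧ BothSigns W a b := by
  classical
  by_contra! hnone
  -- `-η t` is the sign linking `i₀` to `t`; the sign linking `i` to `j` turns out to be `-ηᵢ ηⱼ`.
  let η : Fin m → ℤˣ := fun t => if t ≠ i₀ ∧ reflIn (root i₀ t 1) ∈ W then -1 else 1
  have hη₀ : η i₀ = 1 := by simp [η]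
  have hbase : ∀ t, i₀ ≠ t → reflIn (root i₀ t (-η t)) ∈ W := by
    intro t ht
    by_cases h : reflIn (root i₀ t 1) ∈ W
    · simp [η, ht.symm, h]
    · obtain ⟨σ, hσ⟩ := hlinked i₀ t ht
      obtain rfl : σ = -1 := (Int.units_eq_one_or σ).resolve_left (by rintro rfl; exact h hσ)
      simpa [η, h]
  have hsign : ∀ i j σ, i ≠ j → reflIn (root i j σ) ∈ W → σ = -(η i * η j) := by
    intro i j σ hij h
    rcases eq_or_ne i₀ i with rfl | hi
    · rw [hη₀, one_mul]
      exact sign_eq_of_not_bothSigns (hnone _ _ hij) h (hbase j hij)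
    rcases eq_or_ne i₀ j with rfl | hj
    · rw [← reflIn_root_comm] at h
      rw [hη₀, mul_one]
      exact sign_eq_of_not_bothSigns (hnone _ _ hij.symm) h (hbase i hi)
    have h₀ := sign_eq_of_not_bothSigns (hnone _ _ hj)
      (reflIn_root_mem_trans hi hj hij (hbase i hi) h) (hbase j hj)
    calc σ = η i * -(-η i * σ) := by
          rw [neg_mul, neg_neg, ← mul_assoc, Int.units_mul_self, one_mul]
      _ = -(η i * η j) := by rw [h₀, mul_neg]
  let x : EuclideanSpace ℝ (Fin m) := WithLp.toLp 2 fun t => (η t : ℝ)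
  have hx : x ≠ 0 := fun h => by simpa [x, hη₀] using congrArg (· i₀) h
  refine hx (hspan x fun i j σ hij h => ?_)
  rw [inner_root_left, hsign i j σ hij h]
  push_cast
  linear_combination (-(η i : ℝ)) * Int.cast_units_mul_self (R := ℝ) (η j)

variable {ι : Type*} {f : ι → EuclideanSpace ℝ (Fin m)}

lemma forall_linked_of_connected (hf : (gramGraph f).Connected)
    (hroot : ∀ k, ∃ i j : Fin m, i ≠ j ∧ HasBDPair (f k) i j) (hmem : ∀ k, reflIn (f k) ∈ W)
    (hperp : ∀ x, (∀ k, ⟪f k, x⟫ = 0) → x = 0) (i j : Fin m) : Linked W i j := by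
  refine forall_rel_of_gramGraph_connected linked_equivalence hf
    (EuclideanSpace.exists_apply_ne_zero_of_forall_inner_eq_zero hperp) (fun k s t hs ht => ?_) i j
  obtain ⟨i, j, -, hk⟩ := hroot k
  obtain ⟨c, σ, hc, hfk⟩ := hk.exists_eq_smul_root
  have hσ := hmem k
  rw [hfk, reflIn_smul _ hc] at hσ
  rw [hfk] at hs ht
  exact linked_of_root_apply_ne_zero hσ (right_ne_zero_of_mul hs) (right_ne_zero_of_mul ht)

lemma bothSigns_of_connected (hf : (gramGraph f).Connected)
    (hroot : ∀ k, ∃ i j : Fin m, i ≠ j ∧ HasBDPair (f k) i j) (hmem : ∀ k, reflIn (f k) ∈ W)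
    (hperp : ∀ x, (∀ k, ⟪f k, x⟫ = 0) → x = 0) {i j : Fin m} (hij : i ≠ j) :
    BothSigns W i j := by
  have hlinked := forall_linked_of_connected hf hroot hmem hperp
  obtain ⟨a, b, hab, hboth⟩ := exists_bothSigns i hlinked fun x hx => hperp x fun k => by
    obtain ⟨i, j, hij, hk⟩ := hroot k
    obtain ⟨c, σ, hc, hfk⟩ := hk.exists_eq_smul_root
    have hσ := hmem k
    rw [hfk, reflIn_smul _ hc] at hσ
    rw [hfk, real_inner_smul_left, hx i j σ hij hσ, mul_zero]
  exact bothSigns_of_bothSigns hlinked hab hboth hij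

end Dn

open Dn in
theorem Dn_indecomposable_generates_general {n : ℕ}
    (f : Fin n → EuclideanSpace ℝ (Fin n))
    (hli : LinearIndependent ℝ f)
    (hroot : ∀ k, ∃ i j : Fin n, i ≠ j ∧ HasBDPair (f k) i j)
    (hindec : (gramGraph f).Connected) :
    Subgroup.closure (Set.range fun k => reflIn (f k)) =
      Subgroup.closure {r | ∃ i j : Fin n, i ≠ j ∧
        (r = reflIn (EuclideanSpace.single i (1 : ℝ) + EuclideanSpace.single j 1) ∨
         r = reflIn (EuclideanSpace.single i (1 : ℝ) - EuclideanSpace.single j 1))} := by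
  have hmem : ∀ k, reflIn (f k) ∈ Subgroup.closure (Set.range fun k => reflIn (f k)) :=
    fun k => Subgroup.subset_closure ⟨k, rfl⟩
  have hperp : ∀ x, (∀ k, ⟪f k, x⟫ = 0) → x = 0 := fun x =>
    hli.eq_zero_of_forall_inner_eq_zero (by simp)
  apply le_antisymm
  · rw [Subgroup.closure_le]
    rintro _ ⟨k, rfl⟩
    obtain ⟨i, j, hij, hk⟩ := hroot k
    obtain ⟨c, σ, hc, hfk⟩ := hk.exists_eq_smul_root
    refine Subgroup.subset_closure ⟨i, j, hij, ?_⟩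
    dsimp only
    rw [hfk, reflIn_smul _ hc]
    rcases Int.units_eq_one_or σ with rfl | rfl
    · exact .inl (by rw [root_one])
    · exact .inr (by rw [root_neg_one])
  · rw [Subgroup.closure_le]
    rintro _ ⟨i, j, hij, rfl | rfl⟩
    · rw [← root_one]
      exact bothSigns_of_connected hindec hroot hmem hperp hij 1
    · rw [← root_neg_one]
      exact bothSigns_of_connected hindec hroot hmem hperp hij (-1)

/-- Every maximal rank proper reflection subgroup of `Dₙ` is decomposable: an
indecomposable linearly independent system of `n` roots `±eᵢ ± eⱼ` of `Dₙ` (with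
`n ≥ 4`) generates, via the reflections in its members, the full Weyl group of `Dₙ`,
the group generated by all reflections in the vectors `eᵢ + eⱼ` and `eᵢ - eⱼ`. -/
theorem Dn_indecomposable_generates {n : ℕ} (hn : 4 ≤ n)
    (f : Fin n → EuclideanSpace ℝ (Fin n))
    (hli : LinearIndependent ℝ f)
    (hroot : ∀ k, ∃ i j : Fin n, i ≠ j ∧ HasBDPair (f k) i j)
    (hindec : (gramGraph f).Connected) :
    Subgroup.closure (Set.range fun k => reflIn (f k)) =
      Subgroup.closure {r | ∃ i j : Fin n, i ≠ j ∧
        (r = reflIn (EuclideanSpace.single i (1 : ℝ) + EuclideanSpace.single j 1) ∨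
         r = reflIn (EuclideanSpace.single i (1 : ℝ) - EuclideanSpace.single j 1))} :=
  Dn_indecomposable_generates_general f hli hroot hindec
end

section
/- Let G be a connected simple graph on the vertex set Fin n with exactly n edges (so G contains exactly one cycle), and let {a, b} be an edge of G that is not a bridge (i.e., removing it leaves G connected; equivalently, it lies on the cycle). Then the family of vectors in EuclideanSpace ℝ (Fin n) consisting of e_a + e_b together with one vector e_i − e_j for each edge {i, j} ≠ {a, b} of G is linearly independent and indecomposable. -/
/-!
Deleting the non-bridge edge `{a, b}` leaves a connected graph, so the vectors `e_i - e_j` of the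
remaining edges span every difference `e_x - e_y`; with `e_a + e_b` they span `e_a`, hence every
`e_x`, and `n` vectors spanning an `n`-dimensional space are independent. Each vector is supported
exactly on the endpoints of its edge, so two distinct edges sharing a vertex give vectors with
inner product `±1`: the Gram graph contains the line graph of the connected graph `G`.
-/

open scoped RealInnerProductSpace

open SimpleGraph Submodule

namespace SimpleGraph

variable {V : Type*} {G : SimpleGraph V}

theorem Reachable.sub_mem_of_forall_adj {R M : Type*} [Ring R] [AddCommGroup M] [Module R M]
    {W : Submodule R M} {v : V → M} (h : ∀ x y, G.Adj x y → v x - v y ∈ W) {x y : V}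
    (hxy : G.Reachable x y) : v x - v y ∈ W := by
  replace hxy := (reachable_iff_reflTransGen x y).1 hxy
  induction hxy with
  | refl => simp
  | tail _ hyz ih => simpa using W.add_mem ih (h _ _ hyz)

theorem lineGraph_reachable_of_mem {e f : G.edgeSet} {u : V} (he : u ∈ (e : Sym2 V))
    (hf : u ∈ (f : Sym2 V)) : G.lineGraph.Reachable e f := by
  by_cases hef : e = f
  · exact hef ▸ .rfl
  · exact Adj.reachable (lineGraph_adj_iff_exists.2 ⟨hef, u, he, hf⟩)

theorem Preconnected.lineGraph (hG : G.Preconnected) : G.lineGraph.Preconnected := by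
  suffices ∀ {u w : V} (p : G.Walk u w) (e f : G.edgeSet), u ∈ (e : Sym2 V) →
      w ∈ (f : Sym2 V) → G.lineGraph.Reachable e f by
    intro e f
    obtain ⟨p⟩ := hG (e : Sym2 V).out.1 (f : Sym2 V).out.1
    exact this p e f (Sym2.out_fst_mem _) (Sym2.out_fst_mem _)
  intro u w p
  induction p with
  | nil => exact fun e f he hf => lineGraph_reachable_of_mem he hf
  | @cons u z w h p ih =>
    intro e f he hf
    let g : G.edgeSet := ⟨s(u, z), h⟩
    exact (lineGraph_reachable_of_mem he (Sym2.mem_mk_left u z)).trans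
      (ih g f (Sym2.mem_mk_right u z) hf)

end SimpleGraph

theorem Submodule.mem_of_sub_mem_of_add_mem {K M ι : Type*} [DivisionRing K] [NeZero (2 : K)]
    [AddCommGroup M] [Module K M] (W : Submodule K M) {v : ι → M}
    (hsub : ∀ x y, v x - v y ∈ W) {a b : ι} (hadd : v a + v b ∈ W) (x : ι) : v x ∈ W := by
  have ha : v a ∈ W := by
    rw [← W.smul_mem_iff (two_ne_zero (α := K)), two_smul]
    simpa using W.add_mem hadd (hsub a b)
  simpa using W.sub_mem ha (hsub a x)

theorem Module.Basis.span_eq_top_of_sub_mem_of_add_mem {K M ι : Type*} [DivisionRing K]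
    [NeZero (2 : K)] [AddCommGroup M] [Module K M] (B : Module.Basis ι K M) {W : Submodule K M}
    (hsub : ∀ x y, B x - B y ∈ W) {a b : ι} (hadd : B a + B b ∈ W) : W = ⊤ := by
  rw [eq_top_iff, ← B.span_eq, span_le]
  rintro _ ⟨x, rfl⟩
  exact W.mem_of_sub_mem_of_add_mem hsub hadd x

namespace EuclideanSpace

variable {V : Type*} [DecidableEq V]

theorem single_add_single_apply_ne_zero_iff {i j : V} (hij : i ≠ j) {x y : ℝ} (hx : x ≠ 0)
    (hy : y ≠ 0) (t : V) :
    (single i x + single j y : EuclideanSpace ℝ V) t ≠ 0 ↔ t ∈ s(i, j) := by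
  by_cases hti : t = i <;> by_cases htj : t = j <;> simp_all

theorem single_sub_single_apply_ne_zero_iff {i j : V} (hij : i ≠ j) (t : V) :
    (single i 1 - single j 1 : EuclideanSpace ℝ V) t ≠ 0 ↔ t ∈ s(i, j) := by
  rw [sub_eq_add_neg, ← PiLp.single_neg]
  exact single_add_single_apply_ne_zero_iff hij one_ne_zero (neg_ne_zero.2 one_ne_zero) t

end EuclideanSpace

theorem SimpleGraph.lineGraph_le_gramGraph {V : Type*} [Fintype V] {G : SimpleGraph V}
    (f : G.edgeSet → EuclideanSpace ℝ V) (hf : ∀ e t, f e t ≠ 0 ↔ t ∈ (e : Sym2 V)) :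
    G.lineGraph ≤ gramGraph f := by
  rintro e e' ⟨hne, u, hu, hu'⟩
  refine ⟨hne, ?_⟩
  have hsingle : ∀ t ≠ u, ⟪f e t, f e' t⟫ = 0 := by
    intro t htu
    by_contra h
    obtain ⟨ht', ht⟩ : f e' t ≠ 0 ∧ f e t ≠ 0 := by simpa using h
    have hsame : (e : Sym2 V) = e' := by
      rw [(Sym2.mem_and_mem_iff htu.symm).1 ⟨hu, (hf e t).1 ht⟩,
        (Sym2.mem_and_mem_iff htu.symm).1 ⟨hu', (hf e' t).1 ht'⟩]
    exact hne (Subtype.ext hsame)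
  rw [PiLp.inner_apply, Finset.sum_eq_single u (fun t _ => hsingle t) (by simp)]
  simpa using mul_ne_zero ((hf e' u).2 hu') ((hf e u).2 hu)

section EdgeFamily

variable {V : Type*} [DecidableEq V] {G : SimpleGraph V} {a b : V}
  (hab : s(a, b) ∈ G.edgeSet) (vec : G.edgeSet → EuclideanSpace ℝ V)

theorem span_range_edgeFamily_eq_top [Fintype V] (hT : (G.deleteEdges {s(a, b)}).Preconnected)
    (hvec_ab : vec ⟨s(a, b), hab⟩ = EuclideanSpace.single a 1 + EuclideanSpace.single b 1)
    (hvec : ∀ e : G.edgeSet, (e : Sym2 V) ≠ s(a, b) → ∃ i j : V, (e : Sym2 V) = s(i, j) ∧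
      vec e = EuclideanSpace.single i 1 - EuclideanSpace.single j 1) :
    span ℝ (Set.range vec) = ⊤ := by
  have hedge : ∀ x y, (G.deleteEdges {s(a, b)}).Adj x y →
      EuclideanSpace.single x 1 - EuclideanSpace.single y 1 ∈ span ℝ (Set.range vec) := by
    intro x y hxy
    obtain ⟨hxy, hne⟩ := deleteEdges_adj.1 hxy
    obtain ⟨i, j, hij, hv⟩ := hvec ⟨s(x, y), hxy⟩ hne
    have hmem : EuclideanSpace.single i 1 - EuclideanSpace.single j 1 ∈
        span ℝ (Set.range vec) := hv ▸ subset_span ⟨_, rfl⟩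
    rcases Sym2.eq_iff.1 hij with ⟨rfl, rfl⟩ | ⟨rfl, rfl⟩
    · exact hmem
    · exact sub_mem_comm_iff.1 hmem
  refine (EuclideanSpace.basisFun V ℝ).toBasis.span_eq_top_of_sub_mem_of_add_mem
    (a := a) (b := b) (fun x y => ?_) ?_ <;>
    simp only [OrthonormalBasis.coe_toBasis, EuclideanSpace.basisFun_apply]
  · exact (hT x y).sub_mem_of_forall_adj hedge
  · rw [← hvec_ab]
    exact subset_span ⟨_, rfl⟩

theorem edgeFamily_apply_ne_zero_iff
    (hvec_ab : vec ⟨s(a, b), hab⟩ = EuclideanSpace.single a 1 + EuclideanSpace.single b 1)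
    (hvec : ∀ e : G.edgeSet, (e : Sym2 V) ≠ s(a, b) → ∃ i j : V, (e : Sym2 V) = s(i, j) ∧
      vec e = EuclideanSpace.single i 1 - EuclideanSpace.single j 1)
    (e : G.edgeSet) (t : V) : vec e t ≠ 0 ↔ t ∈ (e : Sym2 V) := by
  by_cases he : (e : Sym2 V) = s(a, b)
  · rw [show e = ⟨s(a, b), hab⟩ from Subtype.ext he, hvec_ab]
    exact EuclideanSpace.single_add_single_apply_ne_zero_iff (G.ne_of_adj hab)
      one_ne_zero one_ne_zero t
  · obtain ⟨i, j, hij, hv⟩ := hvec e he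
    rw [hv, hij]
    exact EuclideanSpace.single_sub_single_apply_ne_zero_iff (G.mem_edgeSet.1 (hij ▸ e.2)).ne t

end EdgeFamily

/-- Let `G` be a connected graph on `Fin n` with exactly `n` edges, and `{a, b}` a
non-bridge edge of `G`. Then the family of vectors consisting of `e_a + e_b` for the
edge `{a, b}` and one vector `eᵢ - eⱼ` for every other edge `{i, j}` is linearly
independent and indecomposable. -/
theorem Dn_unicyclic_vectors_linearIndependent_indecomposable {n : ℕ}
    (G : SimpleGraph (Fin n)) (hconn : G.Connected)
    (hcard : G.edgeSet.ncard = n)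
    (a b : Fin n) (hab : s(a, b) ∈ G.edgeSet)
    (hnb : ¬ G.IsBridge s(a, b))
    (vec : G.edgeSet → EuclideanSpace ℝ (Fin n))
    (hvec_ab : vec ⟨s(a, b), hab⟩ =
      EuclideanSpace.single a 1 + EuclideanSpace.single b 1)
    (hvec : ∀ e : G.edgeSet, (e : Sym2 (Fin n)) ≠ s(a, b) →
      ∃ i j : Fin n, (e : Sym2 (Fin n)) = s(i, j) ∧
        vec e = EuclideanSpace.single i 1 - EuclideanSpace.single j 1) :
    LinearIndependent ℝ vec ∧ (gramGraph vec).Connected := by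
  classical
  have hspan := span_range_edgeFamily_eq_top hab vec
    (hconn.connected_delete_edge_of_not_isBridge hnb).preconnected hvec_ab hvec
  refine ⟨linearIndependent_of_top_le_span_of_card_eq_finrank hspan.ge ?_, ?_⟩
  · rw [finrank_euclideanSpace_fin, Fintype.card_eq_nat_card, Nat.card_coe_set_eq, hcard]
  · have : Nonempty G.edgeSet := ⟨⟨s(a, b), hab⟩⟩
    exact ⟨hconn.preconnected.lineGraph.mono
      (lineGraph_le_gramGraph vec (edgeFamily_apply_ne_zero_iff hab vec hvec_ab hvec))⟩
end
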